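/- arXiv:1804.05254 — 8 statements merged into one kernel-verified Lean document; each statement's English description precedes it below -/
import Mathlib

section
/- Let m ≥ 2 be an integer. For every x > 0, the kernel K_m has the integral representation K_m(x) = ∫_ℝ ⋯ ∫_ℝ exp( −x^{1/m} ( e^{t_1} + ⋯ + e^{t_{m−1}} + e^{−(t_1 + ⋯ + t_{m−1})} ) ) dt_1 ⋯ dt_{m−1}, an iterated integral over ℝ^{m−1}. -/
open MeasureTheory

/-- The kernel `K_m`, defined recursively by `K_1(x) = e^{-x}` and
`K_{m+1}(x) = ∫_0^∞ K_m(x/t) e^{-t} dt/t` (Mellin convolution with `K_1`).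
The value for `m = 0` is junk. -/
noncomputable def Kker : ℕ → ℝ → ℝ
  | 0, _ => 0
  | 1, x => Real.exp (-x)
  | (m + 2), x => ∫ t in Set.Ioi (0 : ℝ), Kker (m + 1) (x / t) * Real.exp (-t) / t

/-!
Substituting `t = e^s` in the Mellin convolution and unfolding the recursion gives, for `x > 0`,
`K_{n+1}(x) = ∫_{ℝ^n} exp(-∑ e^{t_i} - x e^{-∑ t_i}) dt`; for `n = 0` this is `K_1` itself, since
`ℝ^0` is a point of mass one. Translating every `t_i` by `(log x)/(n+1)` turns the integrand into
`exp(-x^{1/(n+1)} (∑ e^{t_i} + e^{-∑ t_i}))`. The integrability needed for Fubini comes from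
`∑ |t_i| ≤ 2 (∑ e^{t_i} + e^{-∑ t_i})`.
-/

open Real Set

lemma integrable_exp_neg_mul_abs {δ : ℝ} (hδ : 0 < δ) :
    Integrable fun s : ℝ => exp (-δ * |s|) := by
  rw [← integrableOn_univ, ← Iic_union_Ioi (a := 0)]
  refine IntegrableOn.union ?_ ?_
  · exact (integrableOn_exp_mul_Iic hδ 0).congr_fun
      (fun s hs => by rw [abs_of_nonpos hs]; ring_nf) measurableSet_Iic
  · exact (exp_neg_integrableOn_Ioi 0 hδ).congr_fun
      (fun s hs => by rw [abs_of_pos hs]) measurableSet_Ioi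

section

variable {ι : Type*} [Fintype ι]

lemma sum_abs_le_two_mul_sum_exp_add_exp_neg_sum (t : ι → ℝ) :
    ∑ i, |t i| ≤ 2 * (∑ i, exp (t i) + exp (-∑ i, t i)) := by
  calc ∑ i, |t i| = 2 * ∑ i, max (t i) 0 + -∑ i, t i := by
        rw [Finset.mul_sum, ← sub_eq_add_neg, ← Finset.sum_sub_distrib]
        refine Finset.sum_congr rfl fun i _ => ?_
        rcases le_total (t i) 0 with h | h
        · rw [abs_of_nonpos h, max_eq_right h]; ring
        · rw [abs_of_nonneg h, max_eq_left h]; ring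
    _ ≤ 2 * ∑ i, exp (t i) + exp (-∑ i, t i) := by
        gcongr with i
        · exact max_le (by linarith [add_one_le_exp (t i)]) (exp_nonneg _)
        · linarith [add_one_le_exp (-∑ i, t i)]
    _ ≤ 2 * (∑ i, exp (t i) + exp (-∑ i, t i)) := by linarith [exp_pos (-∑ i, t i)]

lemma integrable_exp_neg_mul_sum_exp_add_exp_neg_sum {a : ℝ}
    (ha : 0 < a) :
    Integrable fun t : ι → ℝ => exp (-a * (∑ i, exp (t i) + exp (-∑ i, t i))) := by
  refine (Integrable.fintype_prod (f := fun _ s => exp (-(a / 2) * |s|))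
    fun _ => integrable_exp_neg_mul_abs (half_pos ha)).mono' (by fun_prop)
    (ae_of_all _ fun t => ?_)
  rw [norm_of_nonneg (exp_nonneg _), ← exp_sum, exp_le_exp, ← Finset.mul_sum]
  nlinarith [sum_abs_le_two_mul_sum_exp_add_exp_neg_sum t]

noncomputable def KkerIntegrand (x : ℝ) (t : ι → ℝ) : ℝ :=
  exp (-(∑ i, exp (t i)) - x * exp (-∑ i, t i))

lemma KkerIntegrand_add_const {x : ℝ} (hx : 0 < x) (t : ι → ℝ) :
    KkerIntegrand x (t + fun _ => log x / (Fintype.card ι + 1)) =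
      exp (-(x ^ (1 / ((Fintype.card ι : ℝ) + 1))) * (∑ i, exp (t i) + exp (-∑ i, t i))) := by
  set c := log x / (Fintype.card ι + 1) with hcdef
  have hc : x ^ (1 / ((Fintype.card ι : ℝ) + 1)) = exp c := by
    rw [rpow_def_of_pos hx, hcdef]; ring_nf
  have hxc : x * exp (-(Fintype.card ι * c)) = exp c := by
    nth_rewrite 1 [← exp_log hx]
    rw [← exp_add, hcdef]
    congr 1
    field_simp
    ring
  simp only [KkerIntegrand, Pi.add_apply, exp_add, ← Finset.sum_mul, Finset.sum_add_distrib,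
    Finset.sum_const, Finset.card_univ, nsmul_eq_mul, neg_add, hc]
  congr 1
  linear_combination (-exp (-∑ i, t i)) * hxc

lemma integrable_KkerIntegrand {x : ℝ} (hx : 0 < x) :
    Integrable (KkerIntegrand x : (ι → ℝ) → ℝ) := by
  set c : ι → ℝ := fun _ => log x / (Fintype.card ι + 1)
  have h := (integrable_exp_neg_mul_sum_exp_add_exp_neg_sum (ι := ι)
    (rpow_pos_of_pos hx (1 / ((Fintype.card ι : ℝ) + 1)))).comp_sub_right c
  refine h.congr (ae_of_all _ fun t => ?_)
  simp only [← KkerIntegrand_add_const hx, sub_add_cancel, c]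

lemma integral_KkerIntegrand {x : ℝ} (hx : 0 < x) :
    ∫ t : ι → ℝ, KkerIntegrand x t =
      ∫ t : ι → ℝ, exp (-(x ^ (1 / ((Fintype.card ι : ℝ) + 1))) *
        (∑ i, exp (t i) + exp (-∑ i, t i))) := by
  simp only [← KkerIntegrand_add_const hx]
  exact (integral_add_right_eq_self _ _).symm

end

lemma KkerIntegrand_cons {n : ℕ} (x s : ℝ) (t : Fin n → ℝ) :
    KkerIntegrand x (Fin.cons s t : Fin (n + 1) → ℝ) =
      KkerIntegrand (x * exp (-s)) t * exp (-exp s) := by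
  simp only [KkerIntegrand, Fin.sum_univ_succ, Fin.cons_zero, Fin.cons_succ, ← exp_add]
  congr 1
  rw [neg_add s, exp_add]
  ring

lemma integral_Ioi_div_eq_integral_comp_exp (F : ℝ → ℝ) :
    ∫ t in Ioi (0 : ℝ), F t / t = ∫ s : ℝ, F (exp s) := by
  have h := integral_image_eq_integral_abs_deriv_smul MeasurableSet.univ
    (fun s _ => (hasDerivAt_exp s).hasDerivWithinAt) exp_injective.injOn fun t => F t / t
  rw [image_univ, range_exp] at h
  rw [h, setIntegral_univ]
  refine integral_congr_ae (ae_of_all _ fun s => ?_)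
  simp only [smul_eq_mul, abs_of_pos (exp_pos s)]
  field_simp

lemma integral_fin_cons {α E : Type*} [MeasureSpace α] [SigmaFinite (volume : Measure α)]
    [NormedAddCommGroup E] [NormedSpace ℝ E] {n : ℕ} {f : (Fin (n + 1) → α) → E}
    (hf : Integrable f) :
    ∫ u, f u = ∫ s, ∫ t, f (Fin.cons s t) := by
  have he := (volume_preserving_piFinSuccAbove (fun _ : Fin (n + 1) => α) 0).symm
  have hcons : ∀ p : α × (Fin n → α),
      (MeasurableEquiv.piFinSuccAbove (fun _ => α) 0).symm p = Fin.cons p.1 p.2 := by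
    intro p
    simp [MeasurableEquiv.piFinSuccAbove_symm_apply, Fin.insertNthEquiv, Fin.insertNth_zero']
  rw [← he.integral_comp', Measure.volume_eq_prod, integral_prod]
  · simp only [hcons]
  · rw [← Measure.volume_eq_prod]
    exact (he.integrable_comp_emb (MeasurableEquiv.measurableEmbedding _)).mpr hf

lemma Kker_succ_eq_integral_KkerIntegrand (n : ℕ) {x : ℝ} (hx : 0 < x) :
    Kker (n + 1) x = ∫ t : Fin n → ℝ, KkerIntegrand x t := by
  induction n generalizing x with
  | zero => simp [Kker, KkerIntegrand, measureReal_def, volume_pi, Measure.pi_empty_univ]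
  | succ n ih =>
    calc Kker (n + 2) x = ∫ t in Ioi (0 : ℝ), Kker (n + 1) (x / t) * exp (-t) / t := by
          rw [Kker]
      _ = ∫ s, Kker (n + 1) (x / exp s) * exp (-exp s) :=
          integral_Ioi_div_eq_integral_comp_exp _
      _ = ∫ s, ∫ t : Fin n → ℝ, KkerIntegrand x (Fin.cons s t) := by
          congr 1 with s
          rw [div_eq_mul_inv, ← exp_neg, ih (by positivity), ← integral_mul_const]
          simp only [KkerIntegrand_cons]
      _ = ∫ u, KkerIntegrand x u := (integral_fin_cons (integrable_KkerIntegrand hx)).symm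

/-- For `m ≥ 2` and `x > 0`, `K_m(x)` equals the iterated integral over `ℝ^{m-1}` of
`exp(-x^{1/m}(e^{t_1} + ⋯ + e^{t_{m-1}} + e^{-(t_1 + ⋯ + t_{m-1})}))`. -/
theorem Kker_eq_integral_exp (m : ℕ) (hm : 2 ≤ m) (x : ℝ) (hx : 0 < x) :
    Kker m x =
      ∫ t : Fin (m - 1) → ℝ,
        Real.exp (-(x ^ ((1 : ℝ) / (m : ℝ))) *
          ((∑ i, Real.exp (t i)) + Real.exp (-∑ i, t i))) := by
  obtain ⟨n, rfl⟩ : ∃ n, m = n + 1 := ⟨m - 1, by omega⟩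
  rw [Kker_succ_eq_integral_KkerIntegrand n hx, integral_KkerIntegrand hx]
  simp only [Fintype.card_fin, Nat.cast_add, Nat.cast_one]
  rfl
end

section
/- For every integer m ≥ 1 and every real c > 0, the Mellin transform of K_m satisfies ∫_0^∞ x^{c−1} K_m(x) dx = Γ(c)^m, where Γ is the Gamma function. In particular, for every natural number n, ∫_0^∞ x^n K_m(x) dx = (n!)^m. -/
/-! Both sides are computed as lower Lebesgue integrals, where Tonelli needs no integrability.
The Mellin transform turns the Mellin convolution into a product (swap the integrals, then
substitute `x = t u`), and `K_1 = e^{-x}` has Mellin transform `Γ(c)`; induction on `m` gives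
`Γ(c)^m`, which is finite, so the real integrals agree with the lower ones. -/

open MeasureTheory

open Set
open scoped ENNReal

theorem measurable_Kker : ∀ m, Measurable (Kker m)
  | 0 => measurable_const
  | 1 => Real.measurable_exp.comp measurable_neg
  | m + 2 => by
    have hK := measurable_Kker (m + 1)
    have h : Measurable fun p : ℝ × ℝ => Kker (m + 1) (p.1 / p.2) * Real.exp (-p.2) / p.2 := by
      fun_prop
    exact h.stronglyMeasurable.integral_prod_right'.measurable

theorem Kker_nonneg : ∀ m x, 0 ≤ Kker m x
  | 0, _ => le_rfl
  | 1, _ => (Real.exp_pos _).le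
  | _ + 2, _ => setIntegral_nonneg measurableSet_Ioi fun t (ht : 0 < t) =>
      div_nonneg (mul_nonneg (Kker_nonneg _ _) (Real.exp_pos _).le) ht.le

noncomputable def lmellin (f : ℝ → ℝ≥0∞) (c : ℝ) : ℝ≥0∞ :=
  ∫⁻ x in Ioi 0, ENNReal.ofReal (x ^ (c - 1)) * f x

noncomputable def lmellinConv (f g : ℝ → ℝ≥0∞) (x : ℝ) : ℝ≥0∞ :=
  ∫⁻ t in Ioi 0, f (x / t) * g t * ENNReal.ofReal t⁻¹

theorem lintegral_Ioi_eq_lintegral_comp_mul (F : ℝ → ℝ≥0∞) {t : ℝ} (ht : 0 < t) :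
    ∫⁻ x in Ioi 0, F x = ∫⁻ u in Ioi 0, ENNReal.ofReal t * F (t * u) := by
  have := lintegral_image_eq_lintegral_abs_deriv_mul (s := Ioi 0) measurableSet_Ioi
    (fun u _ => ((hasDerivAt_id u).const_mul t).hasDerivWithinAt)
    (mul_right_injective₀ ht.ne').injOn F
  simpa [image_mul_left_Ioi ht, abs_of_pos ht] using this

theorem lmellin_lmellinConv {f g : ℝ → ℝ≥0∞} (hf : Measurable f) (hg : Measurable g) (c : ℝ) :
    lmellin (lmellinConv f g) c = lmellin f c * lmellin g c := by
  set w : ℝ → ℝ≥0∞ := fun x => ENNReal.ofReal (x ^ (c - 1))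
  have hw : Measurable w := by fun_prop
  have hwf : Measurable fun u => w u * f u := hw.mul hf
  have inner (t : ℝ) (ht : 0 < t) :
      ∫⁻ x in Ioi 0, w x * (f (x / t) * g t * ENNReal.ofReal t⁻¹) = lmellin f c * (w t * g t) := by
    rw [lintegral_Ioi_eq_lintegral_comp_mul _ ht, lmellin, ← lintegral_mul_const _ hwf]
    refine setLIntegral_congr_fun measurableSet_Ioi fun u (hu : 0 < u) => ?_
    have hinv : ENNReal.ofReal t * ENNReal.ofReal t⁻¹ = 1 := by
      rw [← ENNReal.ofReal_mul ht.le, mul_inv_cancel₀ ht.ne', ENNReal.ofReal_one]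
    simp only [w, Real.mul_rpow ht.le hu.le, ENNReal.ofReal_mul (Real.rpow_nonneg ht.le _),
      mul_div_cancel_left₀ u ht.ne']
    calc _ = ENNReal.ofReal t * ENNReal.ofReal t⁻¹ *
          (ENNReal.ofReal (u ^ (c - 1)) * f u * (ENNReal.ofReal (t ^ (c - 1)) * g t)) := by ring
      _ = _ := by rw [hinv, one_mul]
  calc lmellin (lmellinConv f g) c
      = ∫⁻ x in Ioi 0, ∫⁻ t in Ioi 0, w x * (f (x / t) * g t * ENNReal.ofReal t⁻¹) :=
        lintegral_congr fun x => (lintegral_const_mul' _ _ ENNReal.ofReal_ne_top).symm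
    _ = ∫⁻ t in Ioi 0, ∫⁻ x in Ioi 0, w x * (f (x / t) * g t * ENNReal.ofReal t⁻¹) :=
        lintegral_lintegral_swap (by fun_prop)
    _ = ∫⁻ t in Ioi 0, lmellin f c * (w t * g t) :=
        setLIntegral_congr_fun measurableSet_Ioi inner
    _ = lmellin f c * lmellin g c := lintegral_const_mul _ (hw.mul hg)

theorem lmellin_ofReal_toReal {F : ℝ → ℝ≥0∞} (hF : Measurable F) {c : ℝ}
    (hfin : lmellin F c ≠ ∞) :
    lmellin (fun x => ENNReal.ofReal (F x).toReal) c = lmellin F c := by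
  refine lintegral_congr_ae ?_
  filter_upwards [ae_lt_top' (by fun_prop) hfin, ae_restrict_mem measurableSet_Ioi]
    with x hlt (hx : 0 < x)
  rw [ENNReal.ofReal_toReal]
  rintro hFx
  rw [hFx, ENNReal.mul_top (ENNReal.ofReal_pos.2 (Real.rpow_pos_of_pos hx _)).ne'] at hlt
  exact lt_irrefl _ hlt

theorem lmellin_exp_neg {c : ℝ} (hc : 0 < c) :
    lmellin (fun x => ENNReal.ofReal (Real.exp (-x))) c = ENNReal.ofReal (Real.Gamma c) := by
  rw [lmellin, Real.Gamma_eq_integral hc, ofReal_integral_eq_lintegral_ofReal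
    (Real.GammaIntegral_convergent hc)
    (ae_restrict_of_forall_mem measurableSet_Ioi fun x (hx : 0 < x) => by positivity)]
  refine setLIntegral_congr_fun measurableSet_Ioi fun x (hx : 0 < x) => ?_
  rw [← ENNReal.ofReal_mul (Real.rpow_nonneg hx.le _), mul_comm]

/-- Where the Bochner integral is junk (`0`, the integrand not being integrable), the lower
integral is `∞`, whose `toReal` is `0` as well. -/
theorem Kker_add_two_eq_toReal (m : ℕ) (x : ℝ) :
    Kker (m + 2) x = (lmellinConv (fun y => ENNReal.ofReal (Kker (m + 1) y))
      (fun t => ENNReal.ofReal (Real.exp (-t))) x).toReal := by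
  have hK := measurable_Kker (m + 1)
  rw [Kker, integral_eq_lintegral_of_nonneg_ae (ae_restrict_of_forall_mem measurableSet_Ioi
    fun t (ht : 0 < t) => div_nonneg (mul_nonneg (Kker_nonneg _ _) (Real.exp_pos _).le) ht.le)
    (Measurable.aestronglyMeasurable (by fun_prop))]
  congr 1
  refine setLIntegral_congr_fun measurableSet_Ioi fun t (ht : 0 < t) => ?_
  rw [div_eq_mul_inv, ENNReal.ofReal_mul (mul_nonneg (Kker_nonneg _ _) (Real.exp_pos _).le),
    ENNReal.ofReal_mul (Kker_nonneg _ _)]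

theorem lmellin_Kker {c : ℝ} (hc : 0 < c) : ∀ m : ℕ,
    lmellin (fun x => ENNReal.ofReal (Kker (m + 1) x)) c = ENNReal.ofReal (Real.Gamma c ^ (m + 1))
  | 0 => by simpa [Kker] using lmellin_exp_neg hc
  | m + 1 => by
    have hK := measurable_Kker (m + 1)
    have hconv := lmellin_lmellinConv hK.ennreal_ofReal
      (by fun_prop : Measurable fun t => ENNReal.ofReal (Real.exp (-t))) c
    rw [lmellin_Kker hc m, lmellin_exp_neg hc, ← ENNReal.ofReal_mul (by positivity),
      ← pow_succ] at hconv
    simp_rw [Kker_add_two_eq_toReal]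
    rw [lmellin_ofReal_toReal (by unfold lmellinConv; fun_prop)
      (hconv ▸ ENNReal.ofReal_ne_top), hconv]

theorem integral_rpow_mul_Kker {m : ℕ} (hm : 1 ≤ m) {c : ℝ} (hc : 0 < c) :
    ∫ x in Ioi 0, x ^ (c - 1) * Kker m x = Real.Gamma c ^ m := by
  obtain ⟨m, rfl⟩ := Nat.exists_eq_add_of_le' hm
  have hK := measurable_Kker (m + 1)
  rw [integral_eq_lintegral_of_nonneg_ae (ae_restrict_of_forall_mem measurableSet_Ioi
      fun x (hx : 0 < x) => mul_nonneg (Real.rpow_nonneg hx.le _) (Kker_nonneg _ _))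
    (Measurable.aestronglyMeasurable (by fun_prop)),
    setLIntegral_congr_fun measurableSet_Ioi fun x (hx : 0 < x) =>
      ENNReal.ofReal_mul (Real.rpow_nonneg hx.le _),
    ← lmellin, lmellin_Kker hc, ENNReal.toReal_ofReal (by positivity)]

/-- For `m ≥ 1` and `c > 0`, the Mellin transform of `K_m` is `Γ(c)^m`; in particular
`∫_0^∞ x^n K_m(x) dx = (n!)^m` for every natural number `n`. -/
theorem mellin_Kker (m : ℕ) (hm : 1 ≤ m) :
    (∀ c : ℝ, 0 < c →
      ∫ x in Set.Ioi (0 : ℝ), x ^ (c - 1) * Kker m x = Real.Gamma c ^ m) ∧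
    (∀ n : ℕ,
      ∫ x in Set.Ioi (0 : ℝ), x ^ n * Kker m x = (Nat.factorial n : ℝ) ^ m) := by
  refine ⟨fun c hc => integral_rpow_mul_Kker hm hc, fun n => ?_⟩
  simpa [Real.Gamma_nat_eq_factorial] using integral_rpow_mul_Kker hm (c := n + 1) (by positivity)
end

section
/- Let 0 < ε < 1 and z, ω ∈ ℂ. Then ∑_{m=1}^∞ ε^m k_m(z,ω) = ε · ∑_{n=0}^∞ z^n conj(ω)^n / (n! − ε), where all the series converge absolutely. -/
/-!
Write `aₙ = zⁿ conj(ω)ⁿ`, so that `∑ₙ ‖aₙ‖ / n! = exp (‖z‖ ‖ω‖)` converges. The double series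
`∑_{m,n} ε^{m+1} aₙ / (n!)^{m+1}` is dominated by `∑ₙ ‖aₙ‖ / n! · ∑ₘ |ε|^{m+1}`, so it may be
summed in either order; summing over `m` first gives the geometric series
`∑ₘ (ε / n!)^{m+1} = ε / (n! - ε)`, which converges because `n! ≥ 1 > |ε|`.
-/

/-- The reproducing kernel `k_m(z,ω) = ∑ₙ zⁿ conj(ω)ⁿ / (n!)^m`. -/
noncomputable def fockKernel (m : ℕ) (z ω : ℂ) : ℂ :=
  ∑' n : ℕ, z ^ n * (starRingEnd ℂ) ω ^ n / (Nat.factorial n : ℂ) ^ m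

open scoped Nat

lemma hasSum_div_pow_succ {𝕜 : Type*} [NormedField 𝕜] [CompleteSpace 𝕜] {c ε : 𝕜}
    (h : ‖ε‖ < ‖c‖) : HasSum (fun m : ℕ => (ε / c) ^ (m + 1)) (ε / (c - ε)) := by
  have hc : c ≠ 0 := norm_pos_iff.mp ((norm_nonneg ε).trans_lt h)
  have hx : ‖ε / c‖ < 1 := by rwa [norm_div, div_lt_one (norm_pos_iff.mpr hc)]
  have hcε : c - ε ≠ 0 := sub_ne_zero.mpr fun hce => h.ne (by rw [hce])
  have hsum : ε / (c - ε) = ε / c * (1 - ε / c)⁻¹ := by field_simp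
  simp_rw [hsum, pow_succ']
  exact (hasSum_geometric_of_norm_lt_one hx).mul_left (ε / c)

lemma one_sub_norm_mul_le_norm_factorial_sub (ε : ℂ) (n : ℕ) :
    (1 - ‖ε‖) * n ! ≤ ‖(n ! : ℂ) - ε‖ := by
  have hn : (1 : ℝ) ≤ n ! := Nat.one_le_cast.mpr n.factorial_pos
  have := norm_sub_norm_le (n ! : ℂ) ε
  rw [Complex.norm_natCast] at this
  nlinarith [norm_nonneg ε]

lemma norm_div_factorial_pow_le (a : ℂ) (n : ℕ) {m : ℕ} (hm : 1 ≤ m) :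
    ‖a / (n ! : ℂ) ^ m‖ ≤ ‖a‖ / n ! := by
  rw [norm_div, norm_pow, Complex.norm_natCast]
  gcongr
  exact le_self_pow₀ (Nat.one_le_cast.mpr n.factorial_pos) (by omega)

section FactorialWeights

variable {a : ℕ → ℂ} (ha : Summable fun n => ‖a n‖ / n !)
include ha

lemma summable_norm_div_factorial_pow {m : ℕ} (hm : 1 ≤ m) :
    Summable fun n => ‖a n / (n ! : ℂ) ^ m‖ :=
  ha.of_nonneg_of_le (fun _ => norm_nonneg _) fun n => norm_div_factorial_pow_le (a n) n hm

lemma norm_tsum_div_factorial_pow_le {m : ℕ} (hm : 1 ≤ m) :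
    ‖∑' n, a n / (n ! : ℂ) ^ m‖ ≤ ∑' n, ‖a n‖ / n ! :=
  (norm_tsum_le_tsum_norm (summable_norm_div_factorial_pow ha hm)).trans <|
    (summable_norm_div_factorial_pow ha hm).tsum_le_tsum
      (fun n => norm_div_factorial_pow_le (a n) n hm) ha

lemma summable_norm_div_factorial_sub {ε : ℂ} (hε : ‖ε‖ < 1) :
    Summable fun n => ‖a n / ((n ! : ℂ) - ε)‖ := by
  refine (ha.mul_left (1 - ‖ε‖)⁻¹).of_nonneg_of_le (fun _ => norm_nonneg _) fun n => ?_
  rw [norm_div, inv_mul_eq_div, div_div, mul_comm]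
  exact div_le_div_of_nonneg_left (norm_nonneg _)
    (mul_pos (sub_pos.mpr hε) (Nat.cast_pos.mpr n.factorial_pos))
    (one_sub_norm_mul_le_norm_factorial_sub ε n)

lemma summable_norm_pow_succ_mul_tsum_div_factorial_pow {ε : ℂ} (hε : ‖ε‖ < 1) :
    Summable fun m : ℕ => ‖ε ^ (m + 1) * ∑' n, a n / (n ! : ℂ) ^ (m + 1)‖ := by
  refine ((summable_geometric_of_lt_one (norm_nonneg ε) hε).mul_right (∑' n, ‖a n‖ / n !))
    |>.of_nonneg_of_le (fun _ => norm_nonneg _) fun m => ?_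
  rw [norm_mul, norm_pow]
  exact mul_le_mul (pow_le_pow_of_le_one (norm_nonneg ε) hε.le m.le_succ)
    (norm_tsum_div_factorial_pow_le ha (by omega)) (norm_nonneg _) (by positivity)

theorem tsum_pow_succ_mul_tsum_div_factorial_pow {ε : ℂ} (hε : ‖ε‖ < 1) :
    ∑' m : ℕ, ε ^ (m + 1) * ∑' n, a n / (n ! : ℂ) ^ (m + 1) =
      ε * ∑' n, a n / ((n ! : ℂ) - ε) := by
  set F : ℕ × ℕ → ℂ := fun p => ε ^ (p.2 + 1) * (a p.1 / (p.1 ! : ℂ) ^ (p.2 + 1))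
  have hF : Summable F := by
    have hgeom : Summable fun m : ℕ => ‖ε‖ ^ (m + 1) :=
      (summable_nat_add_iff 1).mpr (summable_geometric_of_lt_one (norm_nonneg ε) hε)
    refine Summable.of_norm_bounded
      (ha.mul_of_nonneg hgeom (fun _ => by positivity) fun _ => by positivity) fun p => ?_
    rw [norm_mul, norm_pow, mul_comm]
    gcongr
    exact norm_div_factorial_pow_le _ _ (by omega)
  have hinner (n : ℕ) : ∑' m, F (n, m) = ε * (a n / ((n ! : ℂ) - ε)) := by
    have hn : ‖ε‖ < ‖(n ! : ℂ)‖ := by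
      rw [Complex.norm_natCast]
      exact hε.trans_le (Nat.one_le_cast.mpr n.factorial_pos)
    rw [← mul_div_left_comm, ← ((hasSum_div_pow_succ hn).mul_left (a n)).tsum_eq]
    exact tsum_congr fun m => by simp only [F, div_pow]; ring
  calc ∑' m : ℕ, ε ^ (m + 1) * ∑' n, a n / (n ! : ℂ) ^ (m + 1)
      = ∑' m, ∑' n, F (n, m) := tsum_congr fun m => tsum_mul_left.symm
    _ = ∑' n, ∑' m, F (n, m) := hF.tsum_comm (f := fun n m => F (n, m))
    _ = ε * ∑' n, a n / ((n ! : ℂ) - ε) := by simp only [hinner, tsum_mul_left]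

end FactorialWeights

/-- For `0 < ε < 1` and `z, ω ∈ ℂ`:
`∑_{m=1}^∞ ε^m k_m(z,ω) = ε ∑_{n=0}^∞ zⁿ conj(ω)ⁿ/(n! − ε)`,
all the series converging absolutely. -/
theorem tsum_eps_pow_fockKernel (ε : ℝ) (hε0 : 0 < ε) (hε1 : ε < 1) (z ω : ℂ) :
    (∀ m : ℕ, 1 ≤ m →
      Summable fun n : ℕ =>
        ‖z ^ n * (starRingEnd ℂ) ω ^ n / (Nat.factorial n : ℂ) ^ m‖) ∧
    (Summable fun m : ℕ => ‖(ε : ℂ) ^ (m + 1) * fockKernel (m + 1) z ω‖) ∧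
    (Summable fun n : ℕ =>
      ‖z ^ n * (starRingEnd ℂ) ω ^ n / ((Nat.factorial n : ℂ) - (ε : ℂ))‖) ∧
    ∑' m : ℕ, (ε : ℂ) ^ (m + 1) * fockKernel (m + 1) z ω =
      (ε : ℂ) * ∑' n : ℕ,
        z ^ n * (starRingEnd ℂ) ω ^ n / ((Nat.factorial n : ℂ) - (ε : ℂ)) := by
  have ha : Summable fun n => ‖z ^ n * (starRingEnd ℂ) ω ^ n‖ / n ! := by
    simpa only [norm_mul, norm_pow, RCLike.norm_conj, mul_pow] using
      Real.summable_pow_div_factorial (‖z‖ * ‖ω‖)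
  have hε : ‖(ε : ℂ)‖ < 1 := by rwa [Complex.norm_real, Real.norm_of_nonneg hε0.le]
  exact ⟨fun _ hm => summable_norm_div_factorial_pow ha hm,
    summable_norm_pow_succ_mul_tsum_div_factorial_pow ha hε,
    summable_norm_div_factorial_sub ha hε,
    tsum_pow_succ_mul_tsum_div_factorial_pow ha hε⟩
end

section
/- Let 0 < ε < 1 and z, ω ∈ ℂ. Then ∑_{m=1}^∞ (ε^m / m!) k_m(z,ω) = ∑_{n=0}^∞ ( e^{ε/n!} − 1 ) z^n conj(ω)^n, where all the series converge absolutely. -/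
open Nat

lemma Complex.hasSum_pow_succ_div_factorial_exp_sub_one (x : ℂ) :
    HasSum (fun m : ℕ => x ^ (m + 1) / ((m + 1)! : ℂ)) (Complex.exp x - 1) := by
  have h := NormedSpace.expSeries_div_hasSum_exp x
  rw [← Complex.exp_eq_exp_ℂ] at h
  simpa using (hasSum_nat_add_iff' 1).2 h

lemma summable_norm_tsum_of_summable_norm_prod {E β γ : Type*} [NormedAddCommGroup E]
    [CompleteSpace E] {F : β × γ → E} (h : Summable fun p => ‖F p‖) :
    Summable fun b => ‖∑' c, F (b, c)‖ := by
  obtain ⟨hfiber, htotal⟩ := (summable_prod_of_nonneg fun p => norm_nonneg (F p)).1 h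
  exact htotal.of_nonneg_of_le (fun _ => norm_nonneg _)
    fun b => norm_tsum_le_tsum_norm (hfiber b)

lemma norm_pow_div_factorial_pow_le (w : ℂ) {m : ℕ} (hm : 1 ≤ m) (n : ℕ) :
    ‖w ^ n / (n ! : ℂ) ^ m‖ ≤ ‖w‖ ^ n / n ! := by
  rw [norm_div, norm_pow, norm_pow, Complex.norm_natCast]
  gcongr
  exact le_self_pow₀ (one_le_cast.2 n.factorial_pos) (by omega)

lemma summable_norm_pow_div_factorial_pow (w : ℂ) {m : ℕ} (hm : 1 ≤ m) :
    Summable fun n => ‖w ^ n / (n ! : ℂ) ^ m‖ :=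
  (Real.summable_pow_div_factorial ‖w‖).of_nonneg_of_le (fun _ => norm_nonneg _)
    (norm_pow_div_factorial_pow_le w hm)

noncomputable def fockDoubleTerm (ε w : ℂ) (p : ℕ × ℕ) : ℂ :=
  ε ^ (p.1 + 1) / ((p.1 + 1)! : ℂ) * (w ^ p.2 / (p.2 ! : ℂ) ^ (p.1 + 1))

lemma summable_norm_fockDoubleTerm (ε w : ℂ) : Summable fun p => ‖fockDoubleTerm ε w p‖ := by
  have hε := (summable_nat_add_iff 1).2 (Real.summable_pow_div_factorial ‖ε‖)
  have hprod := hε.mul_of_nonneg (Real.summable_pow_div_factorial ‖w‖)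
    (fun _ => by positivity) (fun _ => by positivity)
  refine hprod.of_nonneg_of_le (fun _ => norm_nonneg _) fun p => ?_
  rw [fockDoubleTerm, norm_mul, norm_div, norm_pow, Complex.norm_natCast]
  gcongr
  exact norm_pow_div_factorial_pow_le w (by omega) p.2

lemma tsum_fockDoubleTerm_snd (ε z ω : ℂ) (m : ℕ) :
    ∑' n, fockDoubleTerm ε (z * starRingEnd ℂ ω) (m, n) =
      ε ^ (m + 1) / ((m + 1)! : ℂ) * fockKernel (m + 1) z ω := by
  simp only [fockDoubleTerm, fockKernel, ← mul_pow]
  exact tsum_mul_left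

lemma hasSum_fockDoubleTerm_fst (ε w : ℂ) (n : ℕ) :
    HasSum (fun m => fockDoubleTerm ε w (m, n)) ((Complex.exp (ε / n !) - 1) * w ^ n) := by
  refine ((Complex.hasSum_pow_succ_div_factorial_exp_sub_one (ε / n !)).mul_right
    (w ^ n)).congr_fun fun m => ?_
  simp only [fockDoubleTerm, div_pow]
  ring

theorem tsum_eps_pow_div_factorial_fockKernel_general (ε : ℝ)
    (z ω : ℂ) :
    (∀ m : ℕ, 1 ≤ m →
      Summable fun n : ℕ =>
        ‖z ^ n * (starRingEnd ℂ) ω ^ n / (Nat.factorial n : ℂ) ^ m‖) ∧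
    (Summable fun m : ℕ =>
      ‖(ε : ℂ) ^ (m + 1) / (Nat.factorial (m + 1) : ℂ) * fockKernel (m + 1) z ω‖) ∧
    (Summable fun n : ℕ =>
      ‖(Complex.exp ((ε : ℂ) / (Nat.factorial n : ℂ)) - 1) *
        (z ^ n * (starRingEnd ℂ) ω ^ n)‖) ∧
    ∑' m : ℕ, (ε : ℂ) ^ (m + 1) / (Nat.factorial (m + 1) : ℂ) * fockKernel (m + 1) z ω =
      ∑' n : ℕ, (Complex.exp ((ε : ℂ) / (Nat.factorial n : ℂ)) - 1) *
        (z ^ n * (starRingEnd ℂ) ω ^ n) := by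
  set w := z * starRingEnd ℂ ω
  have hF := summable_norm_fockDoubleTerm ε w
  have hrow (m : ℕ) := (tsum_fockDoubleTerm_snd ε z ω m).symm
  have hcol (n : ℕ) : (Complex.exp ((ε : ℂ) / n !) - 1) * (z ^ n * starRingEnd ℂ ω ^ n) =
      ∑' m, fockDoubleTerm ε w (m, n) := by
    rw [← mul_pow, (hasSum_fockDoubleTerm_fst ε w n).tsum_eq]
  refine ⟨fun m hm => ?_, ?_, ?_, ?_⟩
  · simpa only [← mul_pow] using summable_norm_pow_div_factorial_pow w hm
  · simpa only [hrow] using summable_norm_tsum_of_summable_norm_prod hF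
  · simpa only [hcol, Prod.swap_prod_mk] using summable_norm_tsum_of_summable_norm_prod hF.prod_symm
  · simp only [hrow, hcol]
    exact (Summable.tsum_comm (f := fun m n => fockDoubleTerm ε w (m, n)) hF.of_norm).symm

/-- For `0 < ε < 1` and `z, ω ∈ ℂ`:
`∑_{m=1}^∞ (ε^m/m!) k_m(z,ω) = ∑_{n=0}^∞ (e^{ε/n!} − 1) zⁿ conj(ω)ⁿ`,
all the series converging absolutely. -/
theorem tsum_eps_pow_div_factorial_fockKernel (ε : ℝ) (hε0 : 0 < ε) (hε1 : ε < 1)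
    (z ω : ℂ) :
    (∀ m : ℕ, 1 ≤ m →
      Summable fun n : ℕ =>
        ‖z ^ n * (starRingEnd ℂ) ω ^ n / (Nat.factorial n : ℂ) ^ m‖) ∧
    (Summable fun m : ℕ =>
      ‖(ε : ℂ) ^ (m + 1) / (Nat.factorial (m + 1) : ℂ) * fockKernel (m + 1) z ω‖) ∧
    (Summable fun n : ℕ =>
      ‖(Complex.exp ((ε : ℂ) / (Nat.factorial n : ℂ)) - 1) *
        (z ^ n * (starRingEnd ℂ) ω ^ n)‖) ∧
    ∑' m : ℕ, (ε : ℂ) ^ (m + 1) / (Nat.factorial (m + 1) : ℂ) * fockKernel (m + 1) z ω =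
      ∑' n : ℕ, (Complex.exp ((ε : ℂ) / (Nat.factorial n : ℂ)) - 1) *
        (z ^ n * (starRingEnd ℂ) ω ^ n) :=
  tsum_eps_pow_div_factorial_fockKernel_general ε z ω
end

section
/- Let m ≥ 1 be an integer. (i) If (g_n) and (h_n) are sequences with ∑_n |g_n|² (n!)^m < ∞ and ∑_n |h_n|² (n!)^m < ∞ such that for every natural number n one has conj(g_{n+1}) ((n+1)!)^m = conj(h_n) (n!)^m (i.e., ⟨z^{n+1}, g⟩_{F_m} = ⟨z^n, h⟩_{F_m} for all n), then h_n = (n+1)^m g_{n+1} for all n, and ∑_{n=1}^∞ |g_n|² (n!)^m n^m < ∞. (ii) Conversely, if (g_n) satisfies ∑_{n=1}^∞ |g_n|² (n!)^m n^m < ∞ and h_n := (n+1)^m g_{n+1}, then ∑_n |h_n|² (n!)^m < ∞ and for every sequence (f_n) with ∑_n |f_n|² (n!)^m n^m < ∞ the series ∑_{n=0}^∞ f_n conj(g_{n+1}) ((n+1)!)^m and ∑_{n=0}^∞ f_n conj(h_n) (n!)^m converge absolutely and are equal. (This states that in F_m the adjoint of multiplication by z is the operator (∂∘M_z)^{m−1}∘∂,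 which sends g(z)=∑ g_n z^n to ∑_n (n+1)^m g_{n+1} z^n, with domain D = { f : ∑_n |f_n|²(n!)^m n^m < ∞ }.) -/
/-!
Since `((n+1)!)^m = (n+1)^m (n!)^m`, the relation `⟨z^{n+1}, g⟩ = ⟨zⁿ, h⟩` determines `hₙ`
coefficientwise, and after an index shift `∑ |gₙ|² (n!)^m n^m` is exactly the `F_m`-norm of `h`.
For absolute convergence, AM–GM bounds `|fₙ| |g_{n+1}| ((n+1)!)^m` by half of
`|fₙ|² (n!)^m + |g_{n+1}|² ((n+1)!)^m (n+1)^m`, and both of these series converge.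
-/

open Nat ComplexConjugate

lemma cast_factorial_succ_pow {R : Type*} [CommSemiring R] (m n : ℕ) :
    ((n + 1)! : R) ^ m = ((n : R) + 1) ^ m * (n ! : R) ^ m := by
  rw [factorial_succ, cast_mul, mul_pow, cast_succ]

lemma summable_of_summable_mul_natCast_pow {u : ℕ → ℝ} (hu : ∀ n, 0 ≤ u n) (m : ℕ)
    (h : Summable fun n : ℕ => u n * (n : ℝ) ^ m) : Summable u := by
  refine (summable_nat_add_iff 1).mp <| ((summable_nat_add_iff 1).mpr h).of_nonneg_of_le
    (fun n => hu _) fun n => ?_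
  have : (1 : ℝ) ≤ ((n + 1 : ℕ) : ℝ) ^ m := one_le_pow₀ (by simp)
  nlinarith [hu (n + 1)]

lemma summable_norm_sq_mul_factorial_pow_mul_pow_iff (m : ℕ) (g : ℕ → ℂ) :
    (Summable fun n : ℕ => ‖((n : ℂ) + 1) ^ m * g (n + 1)‖ ^ 2 * (n ! : ℝ) ^ m) ↔
      Summable fun n : ℕ => ‖g n‖ ^ 2 * (n ! : ℝ) ^ m * (n : ℝ) ^ m := by
  refine (summable_congr fun n => ?_).trans (summable_nat_add_iff 1)
  have : ‖(n : ℂ) + 1‖ = (n : ℝ) + 1 := by exact_mod_cast Complex.norm_natCast (n + 1)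
  rw [norm_mul, norm_pow, this, cast_factorial_succ_pow]
  push_cast
  ring

lemma eq_mul_of_conj_mul_factorial_pow_eq (m n : ℕ) {a b : ℂ}
    (h : conj a * (((n + 1)! : ℝ) : ℂ) ^ m = conj b * ((n ! : ℝ) : ℂ) ^ m) :
    b = ((n : ℂ) + 1) ^ m * a := by
  have hfact : ((n ! : ℝ) : ℂ) ^ m ≠ 0 := pow_ne_zero _ (by exact_mod_cast n.factorial_ne_zero)
  push_cast at h hfact
  rw [cast_factorial_succ_pow] at h
  apply (starRingEnd ℂ).injective
  apply mul_right_cancel₀ hfact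
  simp only [map_mul, map_pow, map_add, map_natCast, map_one]
  linear_combination -h

lemma conj_mul_factorial_succ_pow (m n : ℕ) (a : ℂ) :
    conj a * (((n + 1)! : ℝ) : ℂ) ^ m = conj (((n : ℂ) + 1) ^ m * a) * ((n ! : ℝ) : ℂ) ^ m := by
  push_cast
  rw [cast_factorial_succ_pow]
  simp only [map_mul, map_pow, map_add, map_natCast, map_one]
  ring

lemma norm_mul_conj_mul_factorial_succ_pow_le (m n : ℕ) (a b : ℂ) :
    ‖a * conj b * (((n + 1)! : ℝ) : ℂ) ^ m‖ ≤
      (‖a‖ ^ 2 * (n ! : ℝ) ^ m + ‖b‖ ^ 2 * ((n + 1)! : ℝ) ^ m * ((n + 1 : ℕ) : ℝ) ^ m) / 2 := by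
  have hw : (0 : ℝ) ≤ (n ! : ℝ) ^ m := by positivity
  rw [norm_mul, norm_mul, Complex.norm_conj, norm_pow, Complex.norm_real, Real.norm_natCast,
    cast_factorial_succ_pow]
  push_cast
  nlinarith [mul_nonneg hw (sq_nonneg (‖a‖ - ((n : ℝ) + 1) ^ m * ‖b‖))]

theorem adjoint_of_mul_z_Fock_general (m : ℕ) :
    (∀ g h : ℕ → ℂ,
      (Summable fun n : ℕ => ‖g n‖ ^ 2 * (Nat.factorial n : ℝ) ^ m) →
      (Summable fun n : ℕ => ‖h n‖ ^ 2 * (Nat.factorial n : ℝ) ^ m) →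
      (∀ n : ℕ,
        (starRingEnd ℂ) (g (n + 1)) * ((Nat.factorial (n + 1) : ℝ) : ℂ) ^ m =
          (starRingEnd ℂ) (h n) * ((Nat.factorial n : ℝ) : ℂ) ^ m) →
      ((∀ n : ℕ, h n = ((n : ℂ) + 1) ^ m * g (n + 1)) ∧
        Summable fun n : ℕ =>
          ‖g n‖ ^ 2 * (Nat.factorial n : ℝ) ^ m * (n : ℝ) ^ m)) ∧
    (∀ g : ℕ → ℂ,
      (Summable fun n : ℕ =>
        ‖g n‖ ^ 2 * (Nat.factorial n : ℝ) ^ m * (n : ℝ) ^ m) →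
      ((Summable fun n : ℕ =>
          ‖((n : ℂ) + 1) ^ m * g (n + 1)‖ ^ 2 * (Nat.factorial n : ℝ) ^ m) ∧
        ∀ f : ℕ → ℂ,
          (Summable fun n : ℕ =>
            ‖f n‖ ^ 2 * (Nat.factorial n : ℝ) ^ m * (n : ℝ) ^ m) →
          (Summable fun n : ℕ =>
            ‖f n * (starRingEnd ℂ) (g (n + 1)) * ((Nat.factorial (n + 1) : ℝ) : ℂ) ^ m‖) ∧
          (Summable fun n : ℕ =>
            ‖f n * (starRingEnd ℂ) (((n : ℂ) + 1) ^ m * g (n + 1)) *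
              ((Nat.factorial n : ℝ) : ℂ) ^ m‖) ∧
          ∑' n : ℕ,
              f n * (starRingEnd ℂ) (g (n + 1)) * ((Nat.factorial (n + 1) : ℝ) : ℂ) ^ m =
            ∑' n : ℕ,
              f n * (starRingEnd ℂ) (((n : ℂ) + 1) ^ m * g (n + 1)) *
                ((Nat.factorial n : ℝ) : ℂ) ^ m)) := by
  refine ⟨fun g h _ hh hinner => ?_, fun g hg => ?_⟩
  · have hcoeff (n : ℕ) : h n = ((n : ℂ) + 1) ^ m * g (n + 1) :=
      eq_mul_of_conj_mul_factorial_pow_eq m n (hinner n)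
    refine ⟨hcoeff, (summable_norm_sq_mul_factorial_pow_mul_pow_iff m g).mp ?_⟩
    simpa only [← hcoeff] using hh
  refine ⟨(summable_norm_sq_mul_factorial_pow_mul_pow_iff m g).mpr hg, fun f hf => ?_⟩
  have hf' : Summable fun n : ℕ => ‖f n‖ ^ 2 * (n ! : ℝ) ^ m :=
    summable_of_summable_mul_natCast_pow (fun n => by positivity) m hf
  have habs : Summable fun n : ℕ =>
      ‖f n * conj (g (n + 1)) * (((n + 1)! : ℝ) : ℂ) ^ m‖ :=
    .of_nonneg_of_le (fun n => norm_nonneg _)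
      (fun n => norm_mul_conj_mul_factorial_succ_pow_le m n (f n) (g (n + 1)))
      ((hf'.add ((summable_nat_add_iff 1).mpr hg)).div_const 2)
  have hterm (n : ℕ) : f n * conj (g (n + 1)) * (((n + 1)! : ℝ) : ℂ) ^ m =
      f n * conj (((n : ℂ) + 1) ^ m * g (n + 1)) * ((n ! : ℝ) : ℂ) ^ m := by
    rw [mul_assoc, conj_mul_factorial_succ_pow, ← mul_assoc]
  exact ⟨habs, by simpa only [hterm] using habs, tsum_congr hterm⟩

/-- In `F_m` the adjoint of multiplication by `z` is `(∂∘M_z)^{m-1}∘∂`,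
which sends `g(z) = ∑ gₙ zⁿ` to `∑ (n+1)^m g_{n+1} zⁿ`, with domain
`D = {f : ∑ |fₙ|²(n!)^m n^m < ∞}`.
(i) If `g, h ∈ F_m` and `⟨z^{n+1}, g⟩ = ⟨zⁿ, h⟩` for all `n`, then
`hₙ = (n+1)^m g_{n+1}` and `∑ |gₙ|²(n!)^m n^m < ∞`.
(ii) Conversely, if `∑ |gₙ|²(n!)^m n^m < ∞` and `hₙ := (n+1)^m g_{n+1}`, then `h ∈ F_m`
and for every `f ∈ D` the series `∑ fₙ conj(g_{n+1})((n+1)!)^m` and `∑ fₙ conj(hₙ)(n!)^m`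
converge absolutely and are equal. -/
theorem adjoint_of_mul_z_Fock (m : ℕ) (hm : 1 ≤ m) :
    (∀ g h : ℕ → ℂ,
      (Summable fun n : ℕ => ‖g n‖ ^ 2 * (Nat.factorial n : ℝ) ^ m) →
      (Summable fun n : ℕ => ‖h n‖ ^ 2 * (Nat.factorial n : ℝ) ^ m) →
      (∀ n : ℕ,
        (starRingEnd ℂ) (g (n + 1)) * ((Nat.factorial (n + 1) : ℝ) : ℂ) ^ m =
          (starRingEnd ℂ) (h n) * ((Nat.factorial n : ℝ) : ℂ) ^ m) →
      ((∀ n : ℕ, h n = ((n : ℂ) + 1) ^ m * g (n + 1)) ∧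
        Summable fun n : ℕ =>
          ‖g n‖ ^ 2 * (Nat.factorial n : ℝ) ^ m * (n : ℝ) ^ m)) ∧
    (∀ g : ℕ → ℂ,
      (Summable fun n : ℕ =>
        ‖g n‖ ^ 2 * (Nat.factorial n : ℝ) ^ m * (n : ℝ) ^ m) →
      ((Summable fun n : ℕ =>
          ‖((n : ℂ) + 1) ^ m * g (n + 1)‖ ^ 2 * (Nat.factorial n : ℝ) ^ m) ∧
        ∀ f : ℕ → ℂ,
          (Summable fun n : ℕ =>
            ‖f n‖ ^ 2 * (Nat.factorial n : ℝ) ^ m * (n : ℝ) ^ m) →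
          (Summable fun n : ℕ =>
            ‖f n * (starRingEnd ℂ) (g (n + 1)) * ((Nat.factorial (n + 1) : ℝ) : ℂ) ^ m‖) ∧
          (Summable fun n : ℕ =>
            ‖f n * (starRingEnd ℂ) (((n : ℂ) + 1) ^ m * g (n + 1)) *
              ((Nat.factorial n : ℝ) : ℂ) ^ m‖) ∧
          ∑' n : ℕ,
              f n * (starRingEnd ℂ) (g (n + 1)) * ((Nat.factorial (n + 1) : ℝ) : ℂ) ^ m =
            ∑' n : ℕ,
              f n * (starRingEnd ℂ) (((n : ℂ) + 1) ^ m * g (n + 1)) *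
                ((Nat.factorial n : ℝ) : ℂ) ^ m)) :=
  adjoint_of_mul_z_Fock_general m
end

section
/- Let m ≥ 1 be an integer and let ⟨·,·⟩ be an inner product (a positive-definite Hermitian sesquilinear form) on the complex vector space of polynomials ℂ[X]. Suppose that for all natural numbers l ≥ 0 and k ≥ 1 one has ⟨X^{l+1}, X^k⟩ = k^m ⟨X^l, X^{k−1}⟩, and ⟨X^{l+1}, 1⟩ = 0 for all l ≥ 0. Then the monomials are pairwise orthogonal, i.e., ⟨X^k, X^l⟩ = 0 whenever k ≠ l, and ⟨X^k, X^k⟩ = (k!)^m ⟨1, 1⟩ for every k ≥ 0. Consequently, the inner product is a positive multiple of the F_m inner product on polynomials: for polynomials f = ∑ f_k X^k and g = ∑ g_k X^k, ⟨f, g⟩ = ⟨1,1⟩ · ∑_k f_k conj(g_k) (k!)^m. -/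
open Polynomial

/-! The recursion `⟨X^{l+1}, X^{k+1}⟩ = (k+1)^m ⟨X^l, X^k⟩` moves both exponents down in step.
Starting above the diagonal it ends at `⟨X^{l+1}, 1⟩ = 0`, and by Hermitian symmetry the same
holds below it; on the diagonal it telescopes to `(k!)^m ⟨1, 1⟩`. A sesquilinear form on `ℂ[X]`
is determined by its values on pairs of monomials, which gives the formula for `⟨f, g⟩`. -/

theorem Polynomial.sesq_apply_eq_sum_coeff_of_orthogonal {R : Type*} [CommSemiring R]
    {σ : R →+* R} (L : R[X] →ₗ[R] R[X] →ₛₗ[σ] R)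
    (horth : ∀ i j : ℕ, i ≠ j → L (X ^ i) (X ^ j) = 0) (f g : R[X]) :
    L f g = ∑ i ∈ f.support, f.coeff i * σ (g.coeff i) * L (X ^ i) (X ^ i) := by
  have hrepr (p : R[X]) (n : ℕ) : (basisMonomials R).repr p n = p.coeff n := rfl
  have hsupp (p : R[X]) : ((basisMonomials R).repr p).support = p.support := rfl
  rw [← LinearMap.sum_repr_mul_repr_mulₛₗ (basisMonomials R) (basisMonomials R) f g]
  simp only [Finsupp.sum, hrepr, hsupp, coe_basisMonomials, ← X_pow_eq_monomial, smul_eq_mul,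
    mul_assoc]
  refine Finset.sum_congr rfl fun i _ => Finset.sum_eq_single i ?_ ?_
  · intro j _ hji
    rw [horth i j hji.symm, mul_zero, mul_zero]
  · intro hi
    rw [notMem_support_iff.mp hi, map_zero, zero_mul, mul_zero]

section FockRecursion

variable {m : ℕ} {B : ℂ[X] → ℂ[X] → ℂ}

noncomputable def sesqOfHermitian (hadd : ∀ f g h : ℂ[X], B (f + g) h = B f h + B g h)
    (hsmul : ∀ (c : ℂ) (f g : ℂ[X]), B (c • f) g = c * B f g)
    (hherm : ∀ f g : ℂ[X], B g f = starRingEnd ℂ (B f g)) :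
    ℂ[X] →ₗ[ℂ] ℂ[X] →ₗ⋆[ℂ] ℂ :=
  LinearMap.mk₂'ₛₗ _ _ B hadd hsmul
    (fun f g h => by rw [hherm, hadd, map_add, ← hherm, ← hherm])
    (fun c f g => by rw [hherm, hsmul, map_mul, ← hherm, smul_eq_mul])

theorem form_X_pow_X_pow_eq_zero_of_lt (h1 : ∀ l : ℕ, B (X ^ (l + 1)) 1 = 0)
    (hrec : ∀ l k : ℕ, B (X ^ (l + 1)) (X ^ (k + 1)) = ((k : ℂ) + 1) ^ m * B (X ^ l) (X ^ k)) :
    ∀ {k l : ℕ}, l < k → B (X ^ k) (X ^ l) = 0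
  | k + 1, 0, _ => by simpa using h1 k
  | k + 1, l + 1, h => by
    rw [hrec, form_X_pow_X_pow_eq_zero_of_lt h1 hrec (Nat.succ_lt_succ_iff.mp h), mul_zero]

theorem form_X_pow_X_pow_eq_zero_of_ne (hherm : ∀ f g : ℂ[X], B g f = starRingEnd ℂ (B f g))
    (h1 : ∀ l : ℕ, B (X ^ (l + 1)) 1 = 0)
    (hrec : ∀ l k : ℕ, B (X ^ (l + 1)) (X ^ (k + 1)) = ((k : ℂ) + 1) ^ m * B (X ^ l) (X ^ k))
    {k l : ℕ} (hkl : k ≠ l) : B (X ^ k) (X ^ l) = 0 := by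
  rcases hkl.lt_or_gt with hlt | hgt
  · rw [hherm, form_X_pow_X_pow_eq_zero_of_lt h1 hrec hlt, map_zero]
  · exact form_X_pow_X_pow_eq_zero_of_lt h1 hrec hgt

theorem form_X_pow_self
    (hrec : ∀ l k : ℕ, B (X ^ (l + 1)) (X ^ (k + 1)) = ((k : ℂ) + 1) ^ m * B (X ^ l) (X ^ k))
    (k : ℕ) : B (X ^ k) (X ^ k) = (k.factorial : ℂ) ^ m * B 1 1 := by
  induction k with
  | zero => simp
  | succ k ih =>
    rw [hrec, ih, Nat.factorial_succ, Nat.cast_mul, mul_pow]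
    push_cast
    ring

end FockRecursion

theorem inner_product_eq_Fock_inner_general (m : ℕ)
    (B : Polynomial ℂ → Polynomial ℂ → ℂ)
    (hadd : ∀ f g h : Polynomial ℂ, B (f + g) h = B f h + B g h)
    (hsmul : ∀ (c : ℂ) (f g : Polynomial ℂ), B (c • f) g = c * B f g)
    (hherm : ∀ f g : Polynomial ℂ, B g f = (starRingEnd ℂ) (B f g))
    (h1 : ∀ l : ℕ, B (X ^ (l + 1)) 1 = 0)
    (hrec : ∀ l k : ℕ,
      B (X ^ (l + 1)) (X ^ (k + 1)) = ((k : ℂ) + 1) ^ m * B (X ^ l) (X ^ k)) :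
    (∀ k l : ℕ, k ≠ l → B (X ^ k) (X ^ l) = 0) ∧
    (∀ k : ℕ, B (X ^ k) (X ^ k) = ((Nat.factorial k : ℝ) : ℂ) ^ m * B 1 1) ∧
    (∀ f g : Polynomial ℂ,
      B f g =
        B 1 1 *
          ∑' k : ℕ,
            f.coeff k * (starRingEnd ℂ) (g.coeff k) * ((Nat.factorial k : ℝ) : ℂ) ^ m) := by
  have horth (k l : ℕ) : k ≠ l → B (X ^ k) (X ^ l) = 0 :=
    form_X_pow_X_pow_eq_zero_of_ne hherm h1 hrec
  have hdiag (k : ℕ) : B (X ^ k) (X ^ k) = ((Nat.factorial k : ℝ) : ℂ) ^ m * B 1 1 := by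
    rw [form_X_pow_self hrec, Complex.ofReal_natCast]
  refine ⟨horth, hdiag, fun f g => ?_⟩
  rw [tsum_eq_sum (s := f.support) fun k hk => by rw [notMem_support_iff.mp hk, zero_mul, zero_mul],
    Finset.mul_sum]
  refine (sesq_apply_eq_sum_coeff_of_orthogonal (sesqOfHermitian hadd hsmul hherm) horth f g).trans
    (Finset.sum_congr rfl fun k _ => ?_)
  simp only [sesqOfHermitian, LinearMap.mk₂'ₛₗ_apply, hdiag]
  ring

/-- Uniqueness: if an inner product (positive-definite Hermitian sesquilinear form,
linear in the first argument) on `ℂ[X]` satisfies `⟨X^{l+1}, 1⟩ = 0` and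
`⟨X^{l+1}, X^{k+1}⟩ = (k+1)^m ⟨X^l, X^k⟩`, then the monomials are pairwise orthogonal,
`⟨X^k, X^k⟩ = (k!)^m ⟨1,1⟩`, and `⟨f,g⟩ = ⟨1,1⟩ ∑ₖ fₖ conj(gₖ) (k!)^m`:
the inner product is a positive multiple of the `F_m` inner product. -/
theorem inner_product_eq_Fock_inner (m : ℕ) (hm : 1 ≤ m)
    (B : Polynomial ℂ → Polynomial ℂ → ℂ)
    (hadd : ∀ f g h : Polynomial ℂ, B (f + g) h = B f h + B g h)
    (hsmul : ∀ (c : ℂ) (f g : Polynomial ℂ), B (c • f) g = c * B f g)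
    (hherm : ∀ f g : Polynomial ℂ, B g f = (starRingEnd ℂ) (B f g))
    (hpos : ∀ f : Polynomial ℂ, 0 ≤ (B f f).re)
    (hdef : ∀ f : Polynomial ℂ, B f f = 0 → f = 0)
    (h1 : ∀ l : ℕ, B (X ^ (l + 1)) 1 = 0)
    (hrec : ∀ l k : ℕ,
      B (X ^ (l + 1)) (X ^ (k + 1)) = ((k : ℂ) + 1) ^ m * B (X ^ l) (X ^ k)) :
    (∀ k l : ℕ, k ≠ l → B (X ^ k) (X ^ l) = 0) ∧
    (∀ k : ℕ, B (X ^ k) (X ^ k) = ((Nat.factorial k : ℝ) : ℂ) ^ m * B 1 1) ∧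
    (∀ f g : Polynomial ℂ,
      B f g =
        B 1 1 *
          ∑' k : ℕ,
            f.coeff k * (starRingEnd ℂ) (g.coeff k) * ((Nat.factorial k : ℝ) : ℂ) ^ m) :=
  inner_product_eq_Fock_inner_general m B hadd hsmul hherm h1 hrec
end

section
/- Let m ≥ 1 be an integer and let S : ℕ × ℕ → ℕ satisfy the recurrence S(k,n) = n·S(k−1,n) + S(k−1,n−1) for k,n ≥ 1, with S(k,0) = 1 if k = 0 and 0 otherwise, and S(k,n) = 0 whenever k < n (so S are the Stirling numbers of the second kind). Let 𝔞 be the operator of multiplication by X and 𝔟 the operator of differentiation on ℂ[X], and set 𝔞* := 𝔟 ∘ ( ∑_{n=1}^{m−1} S(m−1,n) 𝔞^n 𝔟^n ) for m ≥ 2 and 𝔞* := 𝔟 for m = 1. Then for every polynomial p, (𝔞*𝔞 − 𝔞𝔞*)(p) = p + ∑_{n=1}^{m−1} (n+1) S(m, n+1) (𝔞^n 𝔟^n)(p). -/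
/-!
Put `Nₙ = 𝔞ⁿ𝔟ⁿ`. The relation `𝔟𝔞 = 𝔞𝔟 + 1` alone gives `[𝔟, 𝔞] = N₀` and
`[𝔟Nₙ₊₁, 𝔞] = (n+2)Nₙ₊₁ + (n+1)²Nₙ`. Since `S(m-1,0)` vanishes unless `m = 1`, both cases of
`𝔞*` read `𝔟 ∑_{n<m} S(m-1,n) Nₙ`, so `[𝔞*, 𝔞] = ∑_{n<m} (n+1)(S(m-1,n) + (n+1)S(m-1,n+1)) Nₙ`
(using `S(m-1,m) = 0`). The Stirling recurrence turns the coefficient into `(n+1)S(m,n+1)`, and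
the `n = 0` term is `S(m,1)N₀ = 1`.
-/

open Polynomial Finset

/-- Multiplication by `X` on `ℂ[X]`, as a linear endomorphism (the creation operator `𝔞`). -/
noncomputable def aOp : Module.End ℂ (Polynomial ℂ) := LinearMap.mulLeft ℂ (X : Polynomial ℂ)

/-- Differentiation on `ℂ[X]`, as a linear endomorphism (the annihilation operator `𝔟`). -/
noncomputable def bOp : Module.End ℂ (Polynomial ℂ) := Polynomial.derivative

section WeylRelation

variable {R : Type*} [Ring R] {a b : R}

theorem mul_pow_succ_of_mul_eq_mul_add_one (h : b * a = a * b + 1) (n : ℕ) :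
    b * a ^ (n + 1) = a ^ (n + 1) * b + (n + 1) • a ^ n := by
  induction n with
  | zero => simpa using h
  | succ n ih =>
    rw [pow_succ, ← mul_assoc, ih, add_mul, mul_assoc, h, smul_mul_assoc, ← pow_succ,
      mul_add, mul_one, ← mul_assoc]
    module

theorem pow_succ_mul_of_mul_eq_mul_add_one (h : b * a = a * b + 1) (n : ℕ) :
    b ^ (n + 1) * a = a * b ^ (n + 1) + (n + 1) • b ^ n := by
  induction n with
  | zero => simpa using h
  | succ n ih =>
    rw [pow_succ', mul_assoc, ih, mul_add, ← mul_assoc, h, mul_smul_comm, ← pow_succ',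
      add_mul, one_mul, mul_assoc]
    module

theorem commutator_mul_pow_mul_pow_of_mul_eq_mul_add_one (h : b * a = a * b + 1) (n : ℕ) :
    b * (a ^ (n + 1) * b ^ (n + 1)) * a - a * (b * (a ^ (n + 1) * b ^ (n + 1)))
      = (n + 2) • (a ^ (n + 1) * b ^ (n + 1)) + (n + 1) ^ 2 • (a ^ n * b ^ n) := by
  have hcomm : a ^ (n + 1) * a = a * a ^ (n + 1) := (Commute.self_pow a _).eq.symm
  calc _ = b * a ^ (n + 1) * (b ^ (n + 1) * a - a * b ^ (n + 1))
          + (b * a - a * b) * (a ^ (n + 1) * b ^ (n + 1)) := by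
        simp only [mul_sub, sub_mul, mul_assoc, ← mul_assoc (a ^ (n + 1)) a, hcomm]
        abel
    _ = (n + 1) • ((a ^ (n + 1) * b + (n + 1) • a ^ n) * b ^ n) + a ^ (n + 1) * b ^ (n + 1) := by
        rw [pow_succ_mul_of_mul_eq_mul_add_one h, add_sub_cancel_left, h, add_sub_cancel_left,
          one_mul, ← mul_pow_succ_of_mul_eq_mul_add_one h, mul_smul_comm]
    _ = _ := by
        simp only [add_mul, smul_mul_assoc, mul_assoc, ← pow_succ', smul_add, smul_smul]
        module

theorem commutator_mul_sum_of_mul_eq_mul_add_one (h : b * a = a * b + 1) (f : ℕ → ℕ)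
    {m : ℕ} (hf : f m = 0) :
    b * (∑ n ∈ range m, f n • (a ^ n * b ^ n)) * a
        - a * (b * ∑ n ∈ range m, f n • (a ^ n * b ^ n))
      = ∑ n ∈ range m, ((n + 1) * (f n + (n + 1) * f (n + 1))) • (a ^ n * b ^ n) := by
  have hterms : b * (∑ n ∈ range m, f n • (a ^ n * b ^ n)) * a
        - a * (b * ∑ n ∈ range m, f n • (a ^ n * b ^ n))
      = ∑ n ∈ range m, f n • (b * (a ^ n * b ^ n) * a - a * (b * (a ^ n * b ^ n))) := by
    simp only [mul_sum, sum_mul, ← sum_sub_distrib, mul_smul_comm, smul_mul_assoc, smul_sub]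
  cases m with
  | zero => simp
  | succ k =>
    have hsplit : ∀ n, ((n + 1) * (f n + (n + 1) * f (n + 1))) • (a ^ n * b ^ n)
        = (f n * (n + 1)) • (a ^ n * b ^ n) + (f (n + 1) * (n + 1) ^ 2) • (a ^ n * b ^ n) := by
      intro n
      rw [← add_smul]
      ring_nf
    rw [hterms, sum_range_succ', sum_congr rfl fun n _ => hsplit n, sum_add_distrib,
      sum_range_succ' (fun n => (f n * (n + 1)) • (a ^ n * b ^ n)),
      sum_range_succ (fun n => (f (n + 1) * (n + 1) ^ 2) • (a ^ n * b ^ n)), hf]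
    simp only [commutator_mul_pow_mul_pow_of_mul_eq_mul_add_one h, pow_zero, mul_one, h,
      add_sub_cancel_left, smul_add, sum_add_distrib, smul_smul, zero_mul, zero_smul, add_zero,
      zero_add]
    abel

end WeylRelation

theorem bOp_mul_aOp : bOp * aOp = aOp * bOp + 1 := by
  refine LinearMap.ext fun p => ?_
  simp [aOp, bOp, derivative_mul, add_comm]

theorem stirling_succ_one (S : ℕ → ℕ → ℕ) (hS0 : ∀ k : ℕ, S k 0 = if k = 0 then 1 else 0)
    (hSrec : ∀ k n : ℕ, 1 ≤ k → 1 ≤ n → S k n = n * S (k - 1) n + S (k - 1) (n - 1))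
    (hS01 : S 0 1 = 0) (k : ℕ) : S (k + 1) 1 = 1 := by
  induction k with
  | zero => simp [hSrec 1 1 le_rfl le_rfl, hS01, hS0]
  | succ k ih => simp [hSrec (k + 2) 1 (by omega) le_rfl, ih, hS0]

/-- Let `S` be the Stirling numbers of the second kind and set
`𝔞* = (𝔟𝔞)^{m-1}𝔟 = 𝔟 ∘ ∑_{n=1}^{m-1} S(m-1,n) 𝔞ⁿ𝔟ⁿ` (with `𝔞* = 𝔟` for `m = 1`).
Then the commutator satisfies
`[𝔞*, 𝔞] = I + ∑_{n=1}^{m-1} (n+1) S(m, n+1) 𝔞ⁿ𝔟ⁿ` on every polynomial. -/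
theorem commutator_adjoint_creation (m : ℕ) (hm : 1 ≤ m) (S : ℕ → ℕ → ℕ)
    (hS0 : ∀ k : ℕ, S k 0 = if k = 0 then 1 else 0)
    (hSrec : ∀ k n : ℕ, 1 ≤ k → 1 ≤ n → S k n = n * S (k - 1) n + S (k - 1) (n - 1))
    (hSlt : ∀ k n : ℕ, k < n → S k n = 0)
    (astar : Module.End ℂ (Polynomial ℂ))
    (hastar : astar =
      if m = 1 then bOp
      else bOp * ∑ n ∈ Finset.Icc 1 (m - 1), (S (m - 1) n : ℂ) • (aOp ^ n * bOp ^ n)) :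
    ∀ p : Polynomial ℂ,
      (astar * aOp - aOp * astar) p =
        p + ∑ n ∈ Finset.Icc 1 (m - 1),
          ((n + 1 : ℕ) * S m (n + 1) : ℂ) • ((aOp ^ n * bOp ^ n) p) := by
  obtain ⟨k, rfl⟩ : ∃ k, m = k + 1 := ⟨m - 1, by omega⟩
  have hsum (g : ℕ → Module.End ℂ ℂ[X]) :
      ∑ n ∈ range (k + 1), g n = g 0 + ∑ n ∈ Icc 1 k, g n := by
    rw [sum_range_eq_add_Ico _ (by omega : 0 < k + 1), Ico_add_one_right_eq_Icc]
  have hastar' : astar = bOp * ∑ n ∈ range (k + 1), S k n • (aOp ^ n * bOp ^ n) := by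
    rw [hastar, hsum]
    rcases k with _ | k
    · simp [hS0]
    · simp [hS0, Nat.cast_smul_eq_nsmul]
  have hcomm : astar * aOp - aOp * astar
      = ∑ n ∈ range (k + 1), ((n + 1) * S (k + 1) (n + 1)) • (aOp ^ n * bOp ^ n) := by
    rw [hastar', commutator_mul_sum_of_mul_eq_mul_add_one bOp_mul_aOp _
      (hSlt k (k + 1) k.lt_succ_self)]
    refine sum_congr rfl fun n _ => ?_
    rw [hSrec (k + 1) (n + 1) (by omega) (by omega)]
    simp only [add_tsub_cancel_right]
    ring_nf
  intro p
  rw [hcomm, hsum]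
  simp only [LinearMap.add_apply, LinearMap.sum_apply, LinearMap.smul_apply,
    stirling_succ_one S hS0 hSrec (hSlt 0 1 one_pos) k, ← Nat.cast_smul_eq_nsmul ℂ, Nat.cast_mul]
  simp
end

section
/- Let m ≥ 2 be an integer, let (η_n)_{n≥0} be an orthonormal basis of L²(ℝ, dt) such that there exists C > 0 with |η_n(t)| ≤ C for all n ∈ ℕ and t ∈ ℝ, and set h_m(z,t) = ∑_{n=0}^∞ (z^n/(n!)^{m/2}) η_n(t). Then an entire function f(z) = ∑_{n=0}^∞ a_n z^n satisfies ∑_{n=0}^∞ |a_n|² (n!)^m < ∞ if and only if there exists g ∈ L²(ℝ, dt) such that f(z) = ∫_ℝ h_m(z,t) g(t) dt for every z ∈ ℂ. -/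
open MeasureTheory

open scoped InnerProductSpace ENNReal NNReal

/-!
Let `eₙ ∈ L²` be the class of `ηₙ` and `dₙ = (n!)^{m/2}`. Since `dₙ ≥ n!`, the kernel series
`∑ zⁿ/dₙ · ηₙ` converges absolutely in `L²`, so pairing it with `g ∈ L²` may be done termwise:
the transform of `g` is the entire function `∑ ⟪eₙ, g⟫/dₙ · zⁿ`. By uniqueness of Taylor
coefficients, `f` is the transform of `g` iff `⟪eₙ, g⟫ = aₙ dₙ` for all `n`, and by Bessel's
inequality and the Riesz–Fischer theorem for the orthonormal family `(eₙ)` such a `g` exists iff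
`∑ |aₙ dₙ|² = ∑ |aₙ|² (n!)^m` is finite.
-/

lemma Real.rpow_div_two_sq {x : ℝ} (hx : 0 ≤ x) (m : ℕ) : (x ^ ((m : ℝ) / 2)) ^ 2 = x ^ m := by
  rw [Real.rpow_div_two_eq_sqrt _ hx, Real.rpow_natCast, ← pow_mul, mul_comm, pow_mul,
    Real.sq_sqrt hx]

lemma summable_norm_pow_div_factorial_rpow {m : ℕ} (hm : 2 ≤ m) (z : ℂ) :
    Summable fun n : ℕ => ‖z ^ n / (((n.factorial : ℝ) ^ ((m : ℝ) / 2) : ℝ) : ℂ)‖ := by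
  refine (Real.summable_pow_div_factorial ‖z‖).of_nonneg_of_le (fun n => norm_nonneg _)
    fun n => ?_
  have hfact : (1 : ℝ) ≤ n.factorial := mod_cast Nat.one_le_iff_ne_zero.mpr n.factorial_ne_zero
  have hexp : (1 : ℝ) ≤ (m : ℝ) / 2 := by
    rw [le_div_iff₀ two_pos, one_mul]
    exact_mod_cast hm
  rw [norm_div, norm_pow, Complex.norm_real, Real.norm_of_nonneg (by positivity)]
  gcongr
  exact Real.self_le_rpow_of_one_le hfact hexp

section PowerSeries

variable {𝕜 : Type*} [NontriviallyNormedField 𝕜] {f : 𝕜 → 𝕜}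

theorem hasFPowerSeriesOnBall_ofScalars_of_hasSum {c : ℕ → 𝕜}
    (hc : ∀ z, HasSum (fun n => c n * z ^ n) (f z)) :
    HasFPowerSeriesOnBall f (FormalMultilinearSeries.ofScalars 𝕜 c) 0 1 := by
  refine ⟨?_, one_pos, fun {y} _ => ?_⟩
  · have := (FormalMultilinearSeries.ofScalars 𝕜 c).le_radius_of_tendsto (r := 1) (l := 0)
    simp only [FormalMultilinearSeries.ofScalars_norm, NNReal.coe_one, one_pow, mul_one,
      ENNReal.coe_one] at this
    exact this (by simpa using (hc 1).summable.tendsto_atTop_zero.norm)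
  · simpa [FormalMultilinearSeries.ofScalars_apply_eq, smul_eq_mul, mul_comm] using hc y

theorem coeff_eq_of_hasSum_mul_pow {c c' : ℕ → 𝕜}
    (hc : ∀ z, HasSum (fun n => c n * z ^ n) (f z))
    (hc' : ∀ z, HasSum (fun n => c' n * z ^ n) (f z)) : c = c' :=
  FormalMultilinearSeries.ofScalars_series_injective 𝕜 𝕜
    ((hasFPowerSeriesOnBall_ofScalars_of_hasSum hc).hasFPowerSeriesAt.eq_formalMultilinearSeries
      (hasFPowerSeriesOnBall_ofScalars_of_hasSum hc').hasFPowerSeriesAt)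

end PowerSeries

theorem Orthonormal.exists_inner_eq_iff_summable_sq {𝕜 E ι : Type*} [RCLike 𝕜]
    [NormedAddCommGroup E] [InnerProductSpace 𝕜 E] [CompleteSpace E] {e : ι → E}
    (he : Orthonormal 𝕜 e) (c : ι → 𝕜) :
    (∃ x : E, ∀ i, ⟪e i, x⟫_𝕜 = c i) ↔ Summable fun i => ‖c i‖ ^ 2 := by
  classical
  constructor
  · rintro ⟨x, hx⟩
    simpa only [hx] using he.inner_products_summable x
  · intro hc
    obtain ⟨x, hx⟩ : Summable fun i => c i • e i :=
      (he.orthogonalFamily.summable_iff_norm_sq_summable c).mpr hc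
    refine ⟨x, fun i => ?_⟩
    have hinner : HasSum (fun j => ⟪e i, c j • e j⟫_𝕜) ⟪e i, x⟫_𝕜 := (innerSL 𝕜 (e i)).hasSum hx
    simp only [inner_smul_right, orthonormal_iff_ite.mp he, mul_ite, mul_one, mul_zero] at hinner
    simpa using hinner.unique
      (hasSum_single (f := fun j => if i = j then c j else 0) i fun j hj => if_neg (Ne.symm hj))

section L2

variable {α 𝕜 : Type*} [MeasurableSpace α] {μ : Measure α} [RCLike 𝕜]

theorem hasSum_integral_tsum_mul {φ : ℕ → α → 𝕜} {w : ℕ → 𝕜} {g : α → 𝕜} {B : ℝ≥0}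
    (hφ : ∀ n, MemLp (φ n) 2 μ) (hφB : ∀ n, eLpNorm (φ n) 2 μ ≤ B)
    (hw : Summable fun n => ‖w n‖) (hg : MemLp g 2 μ) :
    HasSum (fun n => w n * ∫ a, φ n a * g a ∂μ) (∫ a, (∑' n, w n * φ n a) * g a ∂μ) := by
  have hint : ∀ n, Integrable (fun a => φ n a * g a) μ := fun n => (hφ n).integrable_mul hg
  have hbound : ∀ n, ∫ a, ‖φ n a * g a‖ ∂μ ≤ (B * eLpNorm g 2 μ).toReal := by
    intro n
    rw [integral_norm_eq_lintegral_enorm (hint n).aestronglyMeasurable,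
      ← eLpNorm_one_eq_lintegral_enorm]
    refine ENNReal.toReal_mono (ENNReal.mul_ne_top ENNReal.coe_ne_top hg.eLpNorm_ne_top) ?_
    calc eLpNorm (φ n • g) 1 μ ≤ eLpNorm (φ n) 2 μ * eLpNorm g 2 μ :=
          eLpNorm_smul_le_mul_eLpNorm hg.1 (hφ n).1
      _ ≤ B * eLpNorm g 2 μ := by gcongr; exact hφB n
  have hsum := hasSum_integral_of_summable_integral_norm
    (F := fun n a => w n * (φ n a * g a)) (fun n => (hint n).const_mul (w n))
    ((hw.mul_right (B * eLpNorm g 2 μ).toReal).of_nonneg_of_le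
      (fun n => integral_nonneg fun a => norm_nonneg _) fun n => by
        simp only [norm_mul, integral_const_mul]
        exact mul_le_mul_of_nonneg_left (by simpa only [norm_mul] using hbound n) (norm_nonneg _))
  simp only [integral_const_mul] at hsum
  simpa only [← mul_assoc, tsum_mul_right] using hsum

theorem inner_toLp_ofReal_toLp {φ : α → ℝ} (hφ : MemLp φ 2 μ) {g : α → 𝕜} (hg : MemLp g 2 μ) :
    ⟪hφ.ofReal.toLp (fun a => (φ a : 𝕜)), hg.toLp g⟫_𝕜 = ∫ a, (φ a : 𝕜) * g a ∂μ := by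
  rw [L2.inner_def]
  refine integral_congr_ae ?_
  filter_upwards [(hφ.ofReal (K := 𝕜)).coeFn_toLp, hg.coeFn_toLp] with a hφa hga
  rw [hφa, hga, RCLike.inner_apply, RCLike.conj_ofReal, mul_comm]

theorem exists_inner_toLp_ofReal_eq_iff {ι : Type*} {η : ι → α → ℝ}
    (hη : ∀ i, MemLp (η i) 2 μ) (c : ι → 𝕜) :
    (∃ G : Lp 𝕜 2 μ, ∀ i, ⟪(hη i).ofReal.toLp (fun a => (η i a : 𝕜)), G⟫_𝕜 = c i) ↔
      ∃ g : α → 𝕜, MemLp g 2 μ ∧ ∀ i, ∫ a, (η i a : 𝕜) * g a ∂μ = c i := by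
  constructor
  · rintro ⟨G, hG⟩
    refine ⟨G, Lp.memLp G, fun i => ?_⟩
    rw [← hG i, ← inner_toLp_ofReal_toLp (hη i) (Lp.memLp G), Lp.toLp_coeFn]
  · rintro ⟨g, hg, hcoeff⟩
    exact ⟨hg.toLp g, fun i => (inner_toLp_ofReal_toLp (hη i) hg).trans (hcoeff i)⟩

theorem orthonormal_toLp_ofReal {ι : Type*} [DecidableEq ι] {η : ι → α → ℝ}
    (hη : ∀ i, MemLp (η i) 2 μ) (horth : ∀ i j, ∫ a, η i a * η j a ∂μ = if i = j then 1 else 0) :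
    Orthonormal 𝕜 fun i => (hη i).ofReal.toLp fun a => (η i a : 𝕜) := by
  rw [orthonormal_iff_ite]
  intro i j
  rw [inner_toLp_ofReal_toLp (hη i)]
  simp only [← RCLike.ofReal_mul, integral_ofReal, horth i j]
  split_ifs <;> simp

end L2

theorem forall_eq_integral_tsum_div_mul_iff {α : Type*} [MeasurableSpace α] {μ : Measure α}
    {d : ℕ → ℂ} (hd : ∀ n, d n ≠ 0) (hd_summable : ∀ z, Summable fun n => ‖z ^ n / d n‖)
    {φ : ℕ → α → ℂ} {B : ℝ≥0} (hφ : ∀ n, MemLp (φ n) 2 μ) (hφB : ∀ n, eLpNorm (φ n) 2 μ ≤ B)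
    {f : ℂ → ℂ} {a : ℕ → ℂ} (hf : ∀ z, HasSum (fun n => a n * z ^ n) (f z))
    {g : α → ℂ} (hg : MemLp g 2 μ) :
    (∀ z, f z = ∫ t, (∑' n, z ^ n / d n * φ n t) * g t ∂μ) ↔
      ∀ n, ∫ t, φ n t * g t ∂μ = a n * d n := by
  have hsum : ∀ z, HasSum (fun n => z ^ n / d n * ∫ t, φ n t * g t ∂μ)
      (∫ t, (∑' n, z ^ n / d n * φ n t) * g t ∂μ) := fun z =>
    hasSum_integral_tsum_mul hφ hφB (hd_summable z) hg
  constructor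
  · intro hrep
    have hcoeff : ∀ z, HasSum (fun n => (∫ t, φ n t * g t ∂μ) / d n * z ^ n) (f z) := by
      intro z
      rw [hrep z]
      convert hsum z using 2 with n
      ring
    intro n
    rw [congr_fun (coeff_eq_of_hasSum_mul_pow hf hcoeff) n, div_mul_cancel₀ _ (hd n)]
  · intro hcoeff z
    refine (hf z).unique ?_
    convert hsum z using 2 with n
    rw [hcoeff n]
    field_simp [hd n]

theorem mem_Fock_iff_bargmann_general (m : ℕ) (hm : 2 ≤ m) (η : ℕ → ℝ → ℝ)
    (hL2 : ∀ n : ℕ, MemLp (η n) 2 (volume : Measure ℝ))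
    (horth : ∀ n k : ℕ, ∫ t : ℝ, η n t * η k t = if n = k then 1 else 0)
    (f : ℂ → ℂ) (a : ℕ → ℂ)
    (hf : ∀ z : ℂ, HasSum (fun n : ℕ => a n * z ^ n) (f z)) :
    (Summable fun n : ℕ => ‖a n‖ ^ 2 * (Nat.factorial n : ℝ) ^ m) ↔
      ∃ g : ℝ → ℂ, MemLp g 2 (volume : Measure ℝ) ∧
        ∀ z : ℂ, f z =
          ∫ t : ℝ,
            (∑' n : ℕ,
              z ^ n / (((Nat.factorial n : ℝ) ^ ((m : ℝ) / 2) : ℝ) : ℂ) * (η n t : ℂ)) *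
            g t := by
  set d : ℕ → ℂ := fun n => (((Nat.factorial n : ℝ) ^ ((m : ℝ) / 2) : ℝ) : ℂ)
  set e : ℕ → Lp ℂ 2 (volume : Measure ℝ) := fun n => (hL2 n).ofReal.toLp fun t => (η n t : ℂ)
  have he : Orthonormal ℂ e := orthonormal_toLp_ofReal hL2 horth
  have he_eLpNorm : ∀ n, eLpNorm (fun t => (η n t : ℂ)) 2 volume ≤ (1 : ℝ≥0) := fun n => by
    rw [← Lp.enorm_toLp (hL2 n).ofReal, ENNReal.coe_one, ← ofReal_norm]
    exact (ENNReal.ofReal_eq_one.mpr (he.1 n)).le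
  calc (Summable fun n : ℕ => ‖a n‖ ^ 2 * (Nat.factorial n : ℝ) ^ m)
      ↔ Summable fun n => ‖a n * d n‖ ^ 2 := summable_congr fun n => by
        rw [norm_mul, Complex.norm_real, Real.norm_of_nonneg (by positivity), mul_pow,
          Real.rpow_div_two_sq (by positivity)]
    _ ↔ ∃ G : Lp ℂ 2 (volume : Measure ℝ), ∀ n, ⟪e n, G⟫_ℂ = a n * d n :=
        (he.exists_inner_eq_iff_summable_sq _).symm
    _ ↔ ∃ g : ℝ → ℂ, MemLp g 2 volume ∧ ∀ n, ∫ t, (η n t : ℂ) * g t = a n * d n :=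
        exists_inner_toLp_ofReal_eq_iff hL2 _
    _ ↔ _ := exists_congr fun g => and_congr_right fun hg =>
        (forall_eq_integral_tsum_div_mul_iff (fun n => Complex.ofReal_ne_zero.mpr (by positivity))
          (summable_norm_pow_div_factorial_rpow hm) (fun n => (hL2 n).ofReal) he_eLpNorm hf hg).symm

/-- Generalized Bargmann transform characterization of `F_m`, `m ≥ 2`: given an
orthonormal basis `(ηₙ)` of `L²(ℝ, dt)` uniformly bounded by `C > 0`, and
`h_m(z,t) = ∑ₙ (zⁿ/(n!)^{m/2}) ηₙ(t)`, an entire function `f(z) = ∑ₙ aₙ zⁿ` satisfies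
`∑ₙ |aₙ|²(n!)^m < ∞` iff `f(z) = ∫_ℝ h_m(z,t) g(t) dt` for some `g ∈ L²(ℝ, dt)`. -/
theorem mem_Fock_iff_bargmann (m : ℕ) (hm : 2 ≤ m) (η : ℕ → ℝ → ℝ) (C : ℝ) (hC : 0 < C)
    (hbound : ∀ (n : ℕ) (t : ℝ), |η n t| ≤ C)
    (hL2 : ∀ n : ℕ, MemLp (η n) 2 (volume : Measure ℝ))
    (horth : ∀ n k : ℕ, ∫ t : ℝ, η n t * η k t = if n = k then 1 else 0)
    (hcomplete : ∀ g : ℝ → ℂ, MemLp g 2 (volume : Measure ℝ) →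
      (∀ n : ℕ, ∫ t : ℝ, g t * (η n t : ℂ) = 0) → g =ᵐ[volume] 0)
    (f : ℂ → ℂ) (a : ℕ → ℂ)
    (hf : ∀ z : ℂ, HasSum (fun n : ℕ => a n * z ^ n) (f z)) :
    (Summable fun n : ℕ => ‖a n‖ ^ 2 * (Nat.factorial n : ℝ) ^ m) ↔
      ∃ g : ℝ → ℂ, MemLp g 2 (volume : Measure ℝ) ∧
        ∀ z : ℂ, f z =
          ∫ t : ℝ,
            (∑' n : ℕ,
              z ^ n / (((Nat.factorial n : ℝ) ^ ((m : ℝ) / 2) : ℝ) : ℂ) * (η n t : ℂ)) *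
            g t :=
  mem_Fock_iff_bargmann_general m hm η hL2 horth f a hf
end
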